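/- The combinatorial mutation of a lattice polytope is independent of the choice of the polytopes {G_h}: if {G_h} and {G′_h} both satisfy the defining sandwich condition {u ∈ 𝒱(P) : ⟨w,u⟩ = h} ⊆ G_h + (−h)F ⊆ w_h(P) for all negative heights h, then the resulting mutated polytopes coincide. -/

import Mathlib

open Set Pointwise

noncomputable section

/-- the real vector space `N_ℝ = N ⊗ ℝ` for the lattice `N ≅ ℤᵈ` -/
abbrev RVec (d : ℕ) := Fin d → ℝ

/-- the inclusion of the lattice `N = ℤᵈ` into `N_ℝ` -/
def toR {d : ℕ} (u : Fin d → ℤ) : RVec d := fun i => (u i : ℝ)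

/-- the pairing `⟨w, u⟩` of `w ∈ M = Hom(N, ℤ)` with `u ∈ N_ℝ` -/
def pairR {d : ℕ} (w : Fin d → ℤ) (u : RVec d) : ℝ := ∑ i, (w i : ℝ) * u i

/-- `P` is a lattice polytope: the convex hull of finitely many lattice points. -/
def IsLatticePolytope {d : ℕ} (P : Set (RVec d)) : Prop :=
  ∃ S : Finset (Fin d → ℤ), S.Nonempty ∧ P = convexHull ℝ (toR '' ↑S)

/-- `w ∈ M ≅ ℤᵈ` is a primitive lattice vector -/
def IsPrimitive {d : ℕ} (w : Fin d → ℤ) : Prop := Finset.univ.gcd w = 1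

/-- `w_h(P)`: the convex hull of the lattice points of `P` at height `h` with
respect to `w` -/
def heightSlice {d : ℕ} (w : Fin d → ℤ) (h : ℤ) (P : Set (RVec d)) : Set (RVec d) :=
  convexHull ℝ (toR '' {u : Fin d → ℤ | toR u ∈ P ∧ pairR w (toR u) = (h : ℝ)})

/-- `F` is a lattice polytope lying at height `0` with respect to `w`
(a candidate factor of a polytope with respect to `w`). -/
def IsFactorShape {d : ℕ} (w : Fin d → ℤ) (F : Set (RVec d)) : Prop :=
  IsLatticePolytope F ∧ ∀ x ∈ F, pairR w x = 0

/-- The family `G` witnesses that `F` is a factor of `P` with respect to `w`: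
for every negative height `h`, `G h` is a possibly empty lattice polytope satisfying
the sandwich condition `{u ∈ 𝒱(P) : ⟨w,u⟩ = h} ⊆ G h + (−h)·F ⊆ w_h(P)`,
where `𝒱(P)` is the set of vertices (extreme points) of `P`, `+` is the Minkowski
sum (with `Q + ∅ = ∅`), and `(−h)·F` is the `(−h)`-fold Minkowski sum of `F`. -/
def IsMutationWitness {d : ℕ} (w : Fin d → ℤ) (F : Set (RVec d))
    (G : ℤ → Set (RVec d)) (P : Set (RVec d)) : Prop :=
  ∀ h : ℤ, h < 0 →
    (G h = ∅ ∨ IsLatticePolytope (G h)) ∧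
    {x | x ∈ Set.extremePoints ℝ P ∧ pairR w x = (h : ℝ)} ⊆ G h + (-h : ℝ) • F ∧
    G h + (-h : ℝ) • F ⊆ heightSlice w h P

/-- the combinatorial mutation `mut_w(P, F)` of `P` given by the vector `w`, the
factor `F` and the polytopes `{G_h}`:
`mut_w(P,F) = conv( ⋃_{h<0} G_h ∪ ⋃_{h≥0} (w_h(P) + h·F) )` -/
def mutation {d : ℕ} (w : Fin d → ℤ) (F : Set (RVec d)) (G : ℤ → Set (RVec d))
    (P : Set (RVec d)) : Set (RVec d) :=
  convexHull ℝ ((⋃ (h : ℤ) (_ : h < 0), G h) ∪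
    ⋃ h : ℕ, (heightSlice w (h : ℤ) P + (h : ℝ) • F))

/-! Separate a point `x ∈ G_h` from the mutation along `G'`, which is a polytope and hence closed,
by a functional `l`, and pick `f₀ ∈ F` maximising `l`. The sheared functional
`l + l(f₀)⟨w, ·⟩` is bounded on every vertex `v` of `P` by the bound of `l` on the generators along
`G'`: at a negative height `k` because `v ∈ G'_k + (-k)F`, at a height `k ≥ 0` because
`v + k f₀ ∈ w_k(P) + kF`. Hence it is bounded on `P ∋ x + (-h)f₀`, where it takes the value
`l x`, a contradiction. -/

section Polytope

variable {E : Type*} [NormedAddCommGroup E] [NormedSpace ℝ E]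

def IsPolytope (K : Set E) : Prop := ∃ t : Set E, t.Finite ∧ convexHull ℝ t = K

lemma isPolytope_empty : IsPolytope (∅ : Set E) := ⟨∅, finite_empty, convexHull_empty⟩

lemma convexHull_iUnion_subset_convexHull_iUnion {ι : Type*} {s t : ι → Set E}
    (h : ∀ i, s i ⊆ convexHull ℝ (t i)) : convexHull ℝ (⋃ i, s i) ⊆ convexHull ℝ (⋃ i, t i) :=
  convexHull_min (iUnion_subset fun i => (h i).trans (convexHull_mono (subset_iUnion t i)))
    (convex_convexHull ℝ _)

lemma isPolytope_convexHull_iUnion {ι : Type*} {K : ι → Set E}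
    (hK : ∀ i, IsPolytope (convexHull ℝ (K i))) (hfin : {i | (K i).Nonempty}.Finite) :
    IsPolytope (convexHull ℝ (⋃ i, K i)) := by
  choose t ht hKt using hK
  refine ⟨⋃ i, t i, hfin.iUnion (fun i _ => ht i) fun i hi => ?_, ?_⟩
  · rw [← convexHull_eq_empty (𝕜 := ℝ), hKt, convexHull_eq_empty]
    exact not_nonempty_iff_eq_empty.mp hi
  · exact (convexHull_iUnion_subset_convexHull_iUnion fun i => (subset_convexHull ℝ _).trans
        (hKt i).le).antisymm
      (convexHull_iUnion_subset_convexHull_iUnion fun i => (subset_convexHull ℝ _).trans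
        (hKt i).ge)

namespace IsPolytope

variable {K L : Set E}

lemma isCompact (hK : IsPolytope K) : IsCompact K := by
  obtain ⟨t, ht, rfl⟩ := hK
  exact ht.isCompact_convexHull ℝ

lemma convex (hK : IsPolytope K) : Convex ℝ K := by
  obtain ⟨t, -, rfl⟩ := hK
  exact convex_convexHull ℝ t

lemma add (hK : IsPolytope K) (hL : IsPolytope L) : IsPolytope (K + L) := by
  obtain ⟨s, hs, rfl⟩ := hK
  obtain ⟨t, ht, rfl⟩ := hL
  exact ⟨s + t, hs.add ht, convexHull_add s t⟩

lemma smul (hK : IsPolytope K) (r : ℝ) : IsPolytope (r • K) := by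
  obtain ⟨t, ht, rfl⟩ := hK
  exact ⟨r • t, ht.smul_set, convexHull_smul r t⟩

lemma convexHull_extremePoints (hK : IsPolytope K) : convexHull ℝ (K.extremePoints ℝ) = K := by
  obtain ⟨t, ht, rfl⟩ := hK
  have hfin : ((convexHull ℝ t).extremePoints ℝ).Finite := ht.subset extremePoints_convexHull_subset
  rw [← (hfin.isCompact_convexHull ℝ).isClosed.closure_eq]
  exact closure_convexHull_extremePoints (ht.isCompact_convexHull ℝ) (convex_convexHull ℝ t)

end IsPolytope

end Polytope

section Lattice

variable {d : ℕ}

@[simp]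
lemma pairR_add (w : Fin d → ℤ) (x y : RVec d) : pairR w (x + y) = pairR w x + pairR w y := by
  simp [pairR, mul_add, Finset.sum_add_distrib]

@[simp]
lemma pairR_smul (w : Fin d → ℤ) (r : ℝ) (x : RVec d) : pairR w (r • x) = r * pairR w x := by
  simp only [pairR, Finset.mul_sum, Pi.smul_apply, smul_eq_mul, mul_left_comm]

lemma pairR_toR (w u : Fin d → ℤ) : pairR w (toR u) = ((∑ i, w i * u i : ℤ) : ℝ) := by
  simp [pairR, toR]

def pairRₗ (w : Fin d → ℤ) : RVec d →ₗ[ℝ] ℝ where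
  toFun := pairR w
  map_add' := pairR_add w
  map_smul' := pairR_smul w

lemma continuous_pairR (w : Fin d → ℤ) : Continuous (pairR w) :=
  (pairRₗ w).continuous_of_finiteDimensional

lemma isClosedEmbedding_toR : Topology.IsClosedEmbedding (toR : (Fin d → ℤ) → RVec d) :=
  .piMap fun _ => Int.isClosedEmbedding_coe_real

lemma finite_latticePoints {P : Set (RVec d)} (hP : IsCompact P) : {u | toR u ∈ P}.Finite :=
  (isClosedEmbedding_toR.isCompact_preimage hP).finite_of_discrete

lemma finite_heights (w : Fin d → ℤ) {P : Set (RVec d)} (hP : IsCompact P) :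
    {h : ℤ | ∃ y ∈ P, pairR w y = h}.Finite :=
  (Int.isClosedEmbedding_coe_real.isCompact_preimage
    (hP.image (continuous_pairR w))).finite_of_discrete

variable {w : Fin d → ℤ} {h : ℤ} {P F : Set (RVec d)}

lemma heightSlice_subset (hP : Convex ℝ P) : heightSlice w h P ⊆ P :=
  convexHull_min (by rintro _ ⟨u, hu, rfl⟩; exact hu.1) hP

lemma pairR_of_mem_heightSlice {y : RVec d} (hy : y ∈ heightSlice w h P) : pairR w y = h :=
  convexHull_min (t := {y | pairR w y = h}) (by rintro _ ⟨u, hu, rfl⟩; exact hu.2)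
    (convex_hyperplane (pairRₗ w).isLinear _) hy

lemma isPolytope_heightSlice (hP : IsCompact P) : IsPolytope (heightSlice w h P) :=
  ⟨_, ((finite_latticePoints hP).subset fun _ hu => hu.1).image toR, rfl⟩

namespace IsLatticePolytope

lemma isPolytope (hP : IsLatticePolytope P) : IsPolytope P := by
  obtain ⟨S, -, rfl⟩ := hP
  exact ⟨_, S.finite_toSet.image toR, rfl⟩

lemma nonempty (hP : IsLatticePolytope P) : P.Nonempty := by
  obtain ⟨S, ⟨u, hu⟩, rfl⟩ := hP
  exact ⟨_, subset_convexHull ℝ _ (mem_image_of_mem toR hu)⟩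

lemma exists_mem_heightSlice_of_mem_extremePoints (hP : IsLatticePolytope P) {v : RVec d}
    (hv : v ∈ P.extremePoints ℝ) : ∃ k : ℤ, v ∈ heightSlice w k P := by
  obtain ⟨S, -, rfl⟩ := hP
  obtain ⟨u, -, rfl⟩ := extremePoints_convexHull_subset hv
  exact ⟨_, subset_convexHull ℝ _ ⟨u, ⟨hv.1, pairR_toR w u⟩, rfl⟩⟩

end IsLatticePolytope

end Lattice

section Mutation

variable {d : ℕ} {w : Fin d → ℤ} {P F : Set (RVec d)} {G G' : ℤ → Set (RVec d)}

def mutationGenerators (w : Fin d → ℤ) (F : Set (RVec d)) (G : ℤ → Set (RVec d))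
    (P : Set (RVec d)) : Set (RVec d) :=
  (⋃ (h : ℤ) (_ : h < 0), G h) ∪ ⋃ n : ℕ, (heightSlice w (n : ℤ) P + (n : ℝ) • F)

lemma mutation_eq_convexHull : mutation w F G P = convexHull ℝ (mutationGenerators w F G P) :=
  rfl

namespace IsMutationWitness

lemma isPolytope (hG : IsMutationWitness w F G P) {h : ℤ} (hh : h < 0) : IsPolytope (G h) :=
  (hG h hh).1.elim (fun he => he ▸ isPolytope_empty) IsLatticePolytope.isPolytope

lemma add_smul_mem_heightSlice (hG : IsMutationWitness w F G P) {h : ℤ} (hh : h < 0)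
    {x f : RVec d} (hx : x ∈ G h) (hf : f ∈ F) : x + (-h : ℝ) • f ∈ heightSlice w h P :=
  (hG h hh).2.2 (add_mem_add hx (smul_mem_smul_set hf))

end IsMutationWitness

lemma isPolytope_mutation (hP : IsLatticePolytope P) (hF : IsLatticePolytope F)
    (hG : IsMutationWitness w F G P) : IsPolytope (mutation w F G P) := by
  obtain ⟨f, hf⟩ := hF.nonempty
  have hheights := finite_heights w hP.isPolytope.isCompact
  have hneg : IsPolytope (convexHull ℝ (⋃ (h : ℤ) (_ : h < 0), G h)) := by
    refine isPolytope_convexHull_iUnion (fun h => ?_) (hheights.subset ?_)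
    · by_cases hh : h < 0
      · simpa [hh, (hG.isPolytope hh).convex.convexHull_eq] using hG.isPolytope hh
      · simpa [hh] using isPolytope_empty
    · rintro h ⟨x, hx⟩
      obtain ⟨hh, hx⟩ := mem_iUnion.mp hx
      have hxf := hG.add_smul_mem_heightSlice hh hx hf
      exact ⟨_, heightSlice_subset hP.isPolytope.convex hxf, pairR_of_mem_heightSlice hxf⟩
  have htop : IsPolytope (convexHull ℝ (⋃ n : ℕ, heightSlice w (n : ℤ) P + (n : ℝ) • F)) := by
    refine isPolytope_convexHull_iUnion (fun n => ?_)
      ((hheights.preimage Nat.cast_injective.injOn).subset ?_)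
    · have hpiece := (isPolytope_heightSlice (w := w) (h := n) hP.isPolytope.isCompact).add
        (hF.isPolytope.smul n)
      rwa [hpiece.convex.convexHull_eq]
    · rintro n ⟨_, ⟨y, hy, z, -, rfl⟩⟩
      exact ⟨y, heightSlice_subset hP.isPolytope.convex hy, pairR_of_mem_heightSlice hy⟩
  rw [mutation_eq_convexHull, mutationGenerators, union_eq_iUnion]
  exact isPolytope_convexHull_iUnion (fun b => b.casesOn htop hneg) (toFinite _)

variable {l : RVec d →L[ℝ] ℝ} {u : ℝ}

namespace IsMutationWitness

lemma map_add_mul_pairR_lt (hP : IsLatticePolytope P) (hG : IsMutationWitness w F G P)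
    {f₀ : RVec d} (hf₀ : f₀ ∈ F) (hmax : ∀ f ∈ F, l f ≤ l f₀)
    (hl : ∀ y ∈ mutationGenerators w F G P, l y < u) {v : RVec d} (hv : v ∈ P.extremePoints ℝ) :
    l v + l f₀ * pairR w v < u := by
  obtain ⟨k, hvk⟩ := hP.exists_mem_heightSlice_of_mem_extremePoints (w := w) hv
  have hk := pairR_of_mem_heightSlice hvk
  rcases lt_or_ge k 0 with hneg | hnonneg
  · obtain ⟨g, hg, _, ⟨f, hf, rfl⟩, rfl⟩ := (hG k hneg).2.1 ⟨hv, hk⟩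
    have hlg : l g < u := hl g (mem_union_left _ (mem_iUnion₂.mpr ⟨k, hneg, hg⟩))
    have hf_le : (-k : ℝ) * l f ≤ (-k : ℝ) * l f₀ :=
      mul_le_mul_of_nonneg_left (hmax f hf) (by simpa using hneg.le)
    rw [hk, map_add, map_smul, smul_eq_mul]
    linarith
  · obtain ⟨n, rfl⟩ := Int.eq_ofNat_of_zero_le hnonneg
    have hmem : v + (n : ℝ) • f₀ ∈ mutationGenerators w F G P :=
      mem_union_right _ (mem_iUnion.mpr ⟨n, add_mem_add hvk (smul_mem_smul_set hf₀)⟩)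
    have := hl _ hmem
    rw [map_add, map_smul, smul_eq_mul] at this
    rw [hk]
    push_cast
    linarith

lemma map_lt (hP : IsLatticePolytope P) (hF : IsLatticePolytope F)
    (hG : IsMutationWitness w F G P) (hG' : IsMutationWitness w F G' P)
    (hl : ∀ y ∈ mutationGenerators w F G' P, l y < u) {h : ℤ} (hh : h < 0) {x : RVec d}
    (hx : x ∈ G h) : l x < u := by
  obtain ⟨f₀, hf₀, hmax⟩ :=
    hF.isPolytope.isCompact.exists_isMaxOn hF.nonempty l.continuous.continuousOn
  let L : RVec d →ₗ[ℝ] ℝ := l.toLinearMap + l f₀ • pairRₗ w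
  have hLP : P ⊆ {y | L y < u} := by
    rw [← hP.isPolytope.convexHull_extremePoints]
    exact convexHull_min (fun v hv => hG'.map_add_mul_pairR_lt hP hf₀ hmax hl hv)
      (convex_halfSpace_lt L.isLinear u)
  have hxf := hG.add_smul_mem_heightSlice hh hx hf₀
  have hLx : L (x + (-h : ℝ) • f₀) = l x := by
    change l _ + l f₀ * pairR w _ = _
    rw [pairR_of_mem_heightSlice hxf, map_add, map_smul, smul_eq_mul]
    ring
  exact hLx ▸ hLP (heightSlice_subset hP.isPolytope.convex hxf)

lemma mutation_subset (hP : IsLatticePolytope P) (hF : IsLatticePolytope F)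
    (hG : IsMutationWitness w F G P) (hG' : IsMutationWitness w F G' P) {C : Set (RVec d)}
    (hCclosed : IsClosed C) (hCconv : Convex ℝ C) (hC : mutationGenerators w F G' P ⊆ C) :
    mutation w F G P ⊆ C := by
  refine convexHull_min (union_subset (iUnion₂_subset fun h hh x hx => ?_)
    (subset_union_right.trans hC)) hCconv
  by_contra hxC
  obtain ⟨l, u, hlC, hux⟩ := geometric_hahn_banach_closed_point hCconv hCclosed hxC
  exact hux.not_gt (hG.map_lt hP hF hG' (fun y hy => hlC y (hC hy)) hh hx)

end IsMutationWitness

end Mutation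

theorem mutation_independent_of_witness_general {d : ℕ} (P : Set (RVec d))
    (hP : IsLatticePolytope P) (w : Fin d → ℤ)
    (F : Set (RVec d)) (hF : IsFactorShape w F)
    (G G' : ℤ → Set (RVec d))
    (hG : IsMutationWitness w F G P) (hG' : IsMutationWitness w F G' P) :
    mutation w F G P = mutation w F G' P := by
  have key : ∀ {G₁ G₂ : ℤ → Set (RVec d)}, IsMutationWitness w F G₁ P →
      IsMutationWitness w F G₂ P → mutation w F G₁ P ⊆ mutation w F G₂ P :=
    fun hG₁ hG₂ => hG₁.mutation_subset hP hF.1 hG₂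
      (isPolytope_mutation hP hF.1 hG₂).isCompact.isClosed (convex_convexHull ℝ _)
      (subset_convexHull ℝ _)
  exact (key hG hG').antisymm (key hG' hG)

/-- The combinatorial mutation of a lattice polytope is independent of the choice of
the polytopes `{G_h}`: if `{G_h}` and `{G'_h}` both satisfy the defining sandwich
condition, then the resulting mutated polytopes coincide. -/
theorem mutation_independent_of_witness {d : ℕ} (P : Set (RVec d))
    (hP : IsLatticePolytope P) (w : Fin d → ℤ) (hw : IsPrimitive w)
    (F : Set (RVec d)) (hF : IsFactorShape w F)
    (G G' : ℤ → Set (RVec d))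
    (hG : IsMutationWitness w F G P) (hG' : IsMutationWitness w F G' P) :
    mutation w F G P = mutation w F G' P :=
  mutation_independent_of_witness_general P hP w F hF G G' hG hG'
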